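/- arXiv:1303.1721 — 3 statements merged into one kernel-verified Lean document; each statement's English description precedes it below -/
import Mathlib

section
/- Let X be a real Banach space, let C ⊂ X be a nonempty open bounded convex set and let η > 0 be such that for every g ∈ S_{X*} and every c ∈ ℝ, if the slice C ∩ {x : g(x) < c} is nonempty then it has diameter greater than 2η. Then for every sequence (f_n) in S_{X*} and every x₀ ∈ C there exists a sequence (x_n) in C starting at x₀ such that f_n(x_{n+1} − x_n) < 0 and ‖x_{n+1} − x_n‖ ≥ η for all n ∈ ℕ. -/
/-!
Every point `x` of the open set `C` is a non-minimum of the nonzero functional `f n`, so the slice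
of `C` below `f n x` is nonempty; its diameter exceeds `2η`, so it cannot fit in the ball of radius
`η` about `x`. Choosing such a far point of the slice at every step produces the sequence.
-/

open Metric

theorem Metric.exists_le_dist_of_two_mul_lt_diam {α : Type*} [PseudoMetricSpace α] {s : Set α}
    {r : ℝ} (hs : s.Nonempty) (hdiam : 2 * r < diam s) (x : α) : ∃ y ∈ s, r ≤ dist y x := by
  by_contra! hfar
  obtain ⟨y, hy⟩ := hs
  have hr : 0 ≤ r := dist_nonneg.trans (hfar y hy).le
  linarith [(diam_mono (s := s) hfar isBounded_ball).trans (diam_ball (x := x) hr)]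

theorem IsOpen.exists_mem_lt_of_ne_zero {X : Type*} [NormedAddCommGroup X] [NormedSpace ℝ X]
    {U : Set X} (hU : IsOpen U) {x : X} (hx : x ∈ U) {g : StrongDual ℝ X} (hg : g ≠ 0) :
    ∃ y ∈ U, g y < g x := by
  by_contra! hmin
  have : IsLocalMin g x := Filter.mem_of_superset (hU.mem_nhds hx) hmin
  exact hg (this.hasFDerivAt_eq_zero g.hasFDerivAt)

theorem exists_seq_of_forall_mem_exists_mem {α : Type*} {s : Set α} {R : ℕ → α → α → Prop}
    (hstep : ∀ n, ∀ x ∈ s, ∃ y ∈ s, R n x y) {x₀ : α} (hx₀ : x₀ ∈ s) :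
    ∃ x : ℕ → α, x 0 = x₀ ∧ (∀ n, x n ∈ s) ∧ ∀ n, R n (x n) (x (n + 1)) := by
  choose next hnext_mem hnext using hstep
  let p : ℕ → s := fun n =>
    Nat.rec (motive := fun _ => s) ⟨x₀, hx₀⟩ (fun n q => ⟨next n q q.2, hnext_mem n q q.2⟩) n
  exact ⟨fun n => p n, rfl, fun n => (p n).2, fun n => hnext n (p n) (p n).2⟩

theorem exists_mem_lt_le_norm_sub_of_slice_diam {X : Type*} [NormedAddCommGroup X]
    [NormedSpace ℝ X] {C : Set X} (hCopen : IsOpen C) {η : ℝ}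
    (hslice : ∀ g : StrongDual ℝ X, ‖g‖ = 1 → ∀ c : ℝ,
      ({x ∈ C | g x < c}).Nonempty → 2 * η < diam {x ∈ C | g x < c})
    {g : StrongDual ℝ X} (hg : ‖g‖ = 1) {x : X} (hx : x ∈ C) :
    ∃ y ∈ C, g y < g x ∧ η ≤ ‖y - x‖ := by
  have hg0 : g ≠ 0 := by rintro rfl; simp at hg
  have hne : ({y ∈ C | g y < g x}).Nonempty := hCopen.exists_mem_lt_of_ne_zero hx hg0
  obtain ⟨y, ⟨hyC, hyg⟩, hyx⟩ :=
    exists_le_dist_of_two_mul_lt_diam hne (hslice g hg (g x) hne) x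
  exact ⟨y, hyC, hyg, by rwa [← dist_eq_norm]⟩

theorem statement2_general {X : Type*} [NormedAddCommGroup X] [NormedSpace ℝ X]
    (C : Set X) (hCopen : IsOpen C)
    (η : ℝ)
    (hslice : ∀ g : StrongDual ℝ X, ‖g‖ = 1 → ∀ c : ℝ,
      ({x ∈ C | g x < c}).Nonempty → 2 * η < Metric.diam {x ∈ C | g x < c})
    (f : ℕ → StrongDual ℝ X) (hf : ∀ n, ‖f n‖ = 1)
    (x₀ : X) (hx₀ : x₀ ∈ C) :
    ∃ x : ℕ → X, x 0 = x₀ ∧ (∀ n, x n ∈ C) ∧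
      ∀ n : ℕ, f n (x (n + 1) - x n) < 0 ∧ η ≤ ‖x (n + 1) - x n‖ := by
  refine exists_seq_of_forall_mem_exists_mem
    (R := fun n x y => f n (y - x) < 0 ∧ η ≤ ‖y - x‖) (fun n x hx => ?_) hx₀
  obtain ⟨y, hyC, hyg, hyx⟩ := exists_mem_lt_le_norm_sub_of_slice_diam hCopen hslice (hf n) hx
  exact ⟨y, hyC, by rwa [map_sub, sub_neg], hyx⟩

theorem statement2 {X : Type*} [NormedAddCommGroup X] [NormedSpace ℝ X] [CompleteSpace X]
    (C : Set X) (hCne : C.Nonempty) (hCopen : IsOpen C)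
    (hCbdd : Bornology.IsBounded C) (hCconv : Convex ℝ C)
    (η : ℝ) (hη : 0 < η)
    (hslice : ∀ g : StrongDual ℝ X, ‖g‖ = 1 → ∀ c : ℝ,
      ({x ∈ C | g x < c}).Nonempty → 2 * η < Metric.diam {x ∈ C | g x < c})
    (f : ℕ → StrongDual ℝ X) (hf : ∀ n, ‖f n‖ = 1)
    (x₀ : X) (hx₀ : x₀ ∈ C) :
    ∃ x : ℕ → X, x 0 = x₀ ∧ (∀ n, x n ∈ C) ∧
      ∀ n : ℕ, f n (x (n + 1) - x n) < 0 ∧ η ≤ ‖x (n + 1) - x n‖ :=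
  statement2_general C hCopen η hslice f hf x₀ hx₀
end

section
/- Let X be a real Banach space, D a closed convex subset of X, f̂ ∈ S_{X*} and c ∈ ℝ. Assume that S = D ∩ {x : f̂(x) < c} is bounded and that both S and D∖S are nonempty. Let M = sup{‖u‖ : u ∈ S} and, for x ∈ S, R(x) = (c − f̂(x))/(4M). If x ∈ S and g ∈ S_{X*} satisfy ‖g − f̂‖ ≤ R(x), then (D∖S) ∩ {y : g(y) ≤ g(x)} = ∅. -/
/-!
If some `y ∈ D \ S` had `g y ≤ g x`, the segment `[x, y]` in the convex set `D` would meet the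
level `f̂ = (3c + f̂ x)/4` at a point `z ∈ S`, and `g z ≤ g x` by convexity. On `S` all norms are
at most `M`, so `g` and `f̂` differ there by at most `‖g - f̂‖ M ≤ (c - f̂ x)/4`; hence
`g z ≥ f̂ z - (c - f̂ x)/4` and `g x ≤ f̂ x + (c - f̂ x)/4`, which contradict `g z ≤ g x`.
-/

open Set

theorem norm_le_sSup_image_norm {X : Type*} [SeminormedAddCommGroup X] {S : Set X}
    (hS : Bornology.IsBounded S) {u : X} (hu : u ∈ S) :
    ‖u‖ ≤ sSup ((fun v => ‖v‖) '' S) := by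
  obtain ⟨C, hC⟩ := hS.exists_norm_le
  exact le_csSup ⟨C, forall_mem_image.2 hC⟩ (mem_image_of_mem _ hu)

section LevelCrossing

variable {X : Type*} [NormedAddCommGroup X] [NormedSpace ℝ X]

theorem exists_mem_segment_apply_eq (f : StrongDual ℝ X) {x y : X} {a : ℝ}
    (hxa : f x ≤ a) (hay : a ≤ f y) : ∃ z ∈ segment ℝ x y, f z = a := by
  have ha : a ∈ f.toLinearMap.toAffineMap '' segment ℝ x y := by
    rw [image_segment]
    change a ∈ segment ℝ (f x) (f y)
    rw [segment_eq_Icc (hxa.trans hay)]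
    exact ⟨hxa, hay⟩
  exact ha

theorem abs_sub_apply_le (f g : StrongDual ℝ X) {M : ℝ} {u : X} (hu : ‖u‖ ≤ M) :
    |g u - f u| ≤ ‖g - f‖ * M :=
  calc |g u - f u| = ‖(g - f) u‖ := rfl
    _ ≤ ‖g - f‖ * ‖u‖ := (g - f).le_opNorm u
    _ ≤ ‖g - f‖ * M := by gcongr

theorem apply_lt_apply_of_norm_sub_mul_le {D : Set X} (hD : Convex ℝ D) {f g : StrongDual ℝ X}
    {c M : ℝ} (hM : ∀ u ∈ D, f u < c → ‖u‖ ≤ M) {x y : X} (hxD : x ∈ D) (hyD : y ∈ D)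
    (hfx : f x < c) (hfy : c ≤ f y) (hgf : 4 * (‖g - f‖ * M) ≤ c - f x) : g x < g y := by
  by_contra! hgy
  obtain ⟨z, hz, hfz⟩ :=
    exists_mem_segment_apply_eq f (x := x) (y := y) (a := (3 * c + f x) / 4)
      (by linarith) (by linarith)
  have hzD : z ∈ D := hD.segment_subset hxD hyD hz
  have hgz : g z ≤ g x :=
    (convex_halfSpace_le g.isLinear (g x)).segment_subset (show g x ≤ g x from le_rfl) hgy hz
  have hz_near := abs_le.1 (abs_sub_apply_le f g (hM z hzD (by linarith)))
  have hx_near := abs_le.1 (abs_sub_apply_le f g (hM x hxD hfx))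
  linarith [hz_near.1, hx_near.2]

end LevelCrossing

theorem statement3_general {X : Type*} [NormedAddCommGroup X] [NormedSpace ℝ X]
    (D : Set X) (hDconv : Convex ℝ D)
    (fhat : StrongDual ℝ X) (c : ℝ)
    (S : Set X) (hS : S = {x ∈ D | fhat x < c})
    (hSbdd : Bornology.IsBounded S)
    (M : ℝ) (hM : M = sSup ((fun u => ‖u‖) '' S))
    (x : X) (hx : x ∈ S)
    (g : StrongDual ℝ X)
    (hgf : ‖g - fhat‖ ≤ (c - fhat x) / (4 * M)) :
    (D \ S) ∩ {y | g y ≤ g x} = ∅ := by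
  subst hS
  have hnorm : ∀ u ∈ D, fhat u < c → ‖u‖ ≤ M := fun u hu hfu =>
    hM ▸ norm_le_sSup_image_norm hSbdd ⟨hu, hfu⟩
  have hgap : 0 ≤ c - fhat x := by linarith [hx.2]
  have hM0 : 0 ≤ 4 * M := by linarith [(norm_nonneg x).trans (hnorm x hx.1 hx.2)]
  have hgf' : 4 * (‖g - fhat‖ * M) ≤ c - fhat x := by
    linarith [mul_le_of_le_div₀ hgap hM0 hgf]
  refine eq_empty_iff_forall_notMem.2 fun y ⟨⟨hyD, hyS⟩, hgy⟩ => ?_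
  have hfy : c ≤ fhat y := not_lt.1 fun h => hyS ⟨hyD, h⟩
  exact (apply_lt_apply_of_norm_sub_mul_le hDconv hnorm hx.1 hyD hx.2 hfy hgf').not_ge hgy

theorem statement3 {X : Type*} [NormedAddCommGroup X] [NormedSpace ℝ X] [CompleteSpace X]
    (D : Set X) (hDcl : IsClosed D) (hDconv : Convex ℝ D)
    (fhat : StrongDual ℝ X) (hfhat : ‖fhat‖ = 1) (c : ℝ)
    (S : Set X) (hS : S = {x ∈ D | fhat x < c})
    (hSbdd : Bornology.IsBounded S) (hSne : S.Nonempty) (hDSne : (D \ S).Nonempty)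
    (M : ℝ) (hM : M = sSup ((fun u => ‖u‖) '' S))
    (x : X) (hx : x ∈ S)
    (g : StrongDual ℝ X) (hg : ‖g‖ = 1)
    (hgf : ‖g - fhat‖ ≤ (c - fhat x) / (4 * M)) :
    (D \ S) ∩ {y | g y ≤ g x} = ∅ :=
  statement3_general D hDconv fhat c S hS hSbdd M hM x hx g hgf
end

section
/- Let X be a real Banach space, f ∈ S_{X*}, 0 < ε < 1, p ∈ ℤ and η > 0. Let μ be an ordinal and (f_α)_{α<μ} in X* with ‖f_α − f‖ < ε, (c_α)_{α<μ} in ℝ be such that, with D_α = Λ_p ∩ ⋂_{γ<α} {x : f_γ(x) ≥ c_γ} for α ≤ μ and C_α = D_α ∩ {x : f_α(x) < c_α} for α < μ, each C_α is nonempty and bounded with diam C_α < η, D_μ = Λ_{p+1}, and {C_α : α < μ} is a partition of Λ_p ∖ Λ_{p+1}. For x ∈ C_α set R(x) = (c_α − f_α(x)) / (4·sup{‖u‖ : u ∈ C_α}). Then every map t : Λ_p ∖ Λ_{p+1} → X* satisfying t(x) ∈ S_{X*} ∩ B(f,ε) ∩ B̄(f_α, R(x)) whenever x ∈ C_α has the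 properties: (i) if x ∈ Λ_p ∖ Λ_{p+1} and y ∈ X satisfy ⟨t(x), y − x⟩ ≤ 0, then y ∉ Λ_{p+1}; and (ii) every sequence (x_n) in Λ_p ∖ Λ_{p+1} with ⟨t(x_n), x_{n+1} − x_n⟩ ≤ 0 for all n ∈ ℕ is η-Cauchy. -/
/-!
Let `x ∈ C_α` and let `y` satisfy all the constraints of `C_α` except with `f_α(y) ≥ c_α`. If
`⟨t(x), y - x⟩ ≤ 0`, then since `t(x)` is `R(x)`-close to `f_α`, the gain `f_α(y) - f_α(x)` is at
most `R(x)‖y - x‖`, so `y` is far from `x`. By convexity the point of the segment `[x, y]` where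
`f_α` has climbed three quarters of the way to `c_α` still lies in `C_α`, yet its norm exceeds
`sup{‖u‖ : u ∈ C_α}`: a contradiction. Hence `⟨t(x), y - x⟩ > 0` whenever `y` lies in a later
`D_β` (`β > α`). This gives (i) with `β = μ`, and for (ii) it shows that the indices of the pieces
`C_α` visited by the sequence are non-increasing, hence eventually constant, so that the tail of
the sequence lies in a single piece of diameter `< η`.
-/

open Set

theorem mem_inter_iInter_Iio_of_lt {X ι : Type*} [Preorder ι] {Λ : Set X} {g : ι → X → ℝ}
    {c : ι → ℝ} {α β : ι} (hαβ : α < β) {y : X}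
    (hy : y ∈ Λ ∩ ⋂ γ ∈ Iio β, {x | c γ ≤ g γ x}) :
    y ∈ Λ ∩ ⋂ γ ∈ Iio α, {x | c γ ≤ g γ x} ∧ c α ≤ g α y := by
  simp only [mem_inter_iff, mem_iInter, mem_Iio, mem_ofPred_eq] at hy ⊢
  exact ⟨⟨hy.1, fun γ hγ => hy.2 γ (hγ.trans hαβ)⟩, hy.2 α hαβ⟩

section

variable {X : Type*} [NormedAddCommGroup X]

noncomputable def normSup (s : Set X) : ℝ := sSup ((fun u => ‖u‖) '' s)

theorem norm_le_normSup {s : Set X} (hs : Bornology.IsBounded s) {u : X} (hu : u ∈ s) :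
    ‖u‖ ≤ normSup s := by
  obtain ⟨r, hr⟩ := hs.exists_norm_le
  exact le_csSup ⟨r, by rintro _ ⟨v, hv, rfl⟩; exact hr v hv⟩ ⟨u, hu, rfl⟩

variable [NormedSpace ℝ X]

theorem convex_setOf_mul_norm_add_le (f : StrongDual ℝ X) {ε : ℝ} (hε : 0 ≤ ε) (c : ℝ) :
    Convex ℝ {x : X | f x ≥ ε * ‖x‖ + c} := by
  have hconc : ConcaveOn ℝ univ (⇑f - fun x : X => ε • ‖x‖) :=
    ((f : X →ₗ[ℝ] ℝ).concaveOn convex_univ).sub ((convexOn_norm convex_univ).smul hε)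
  convert hconc.convex_ge c using 1
  ext x
  simp only [mem_ofPred_eq, mem_univ, true_and, Pi.sub_apply, smul_eq_mul]
  constructor <;> intro h <;> linarith

section SublevelPiece

variable {K : Set X} {g : StrongDual ℝ X} {c : ℝ} {x y : X}

theorem mul_norm_sub_lt_of_convex (hK : Convex ℝ K) (hC : Bornology.IsBounded (K ∩ {x | g x < c}))
    (hx : x ∈ K ∩ {x | g x < c}) (hy : y ∈ K) (hcy : c ≤ g y) :
    (c - g x) * ‖y - x‖ < 4 * normSup (K ∩ {x | g x < c}) * (g y - g x) := by
  set S := normSup (K ∩ {x | g x < c})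
  set δ := c - g x
  set F := g y - g x
  have hδ : 0 < δ := sub_pos.2 hx.2
  have hF : δ ≤ F := by simp only [δ, F]; linarith
  have hF0 : 0 < F := hδ.trans_le hF
  by_contra! hfar
  -- `u ∈ [x, y]` with `g u = g x + 3δ/4` stays in `K ∩ {g < c}`, yet `‖u‖ ≥ 3S - ‖x‖`.
  set s := 3 * δ / (4 * F)
  have hs0 : 0 < s := by positivity
  have hs1 : s ≤ 1 := by
    rw [div_le_one (by positivity)]
    linarith
  set u := x + s • (y - x)
  have hgu : g u = g x + 3 * δ / 4 := by
    have hgu' : g u = g x + s * F := by simp only [u, map_add, map_smul, map_sub, smul_eq_mul, F]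
    have hsF : s * F = 3 * δ / 4 := by simp only [s]; field_simp
    rw [hgu', hsF]
  have huC : u ∈ K ∩ {x | g x < c} :=
    ⟨hK.add_smul_sub_mem hx.1 hy ⟨hs0.le, hs1⟩, by simp only [mem_ofPred_eq, hgu, δ]; linarith⟩
  have hsn : s * ‖y - x‖ ≤ ‖u‖ + ‖x‖ := by
    have : s * ‖y - x‖ = ‖u - x‖ := by
      simp only [u, add_sub_cancel_left, norm_smul, Real.norm_of_nonneg hs0.le]
    rw [this]
    exact norm_sub_le u x
  have h3S : 3 * S ≤ s * ‖y - x‖ := by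
    rw [div_mul_eq_mul_div, le_div_iff₀ (by positivity)]
    nlinarith
  have hxS := norm_le_normSup hC hx
  have huS := norm_le_normSup hC huC
  -- `3S ≤ s‖y - x‖ ≤ ‖u‖ + ‖x‖ ≤ 2S` forces `S = 0`, hence `y = x`.
  have hyx : ‖y - x‖ = 0 := by nlinarith [norm_nonneg (y - x)]
  rw [norm_eq_zero, sub_eq_zero] at hyx
  simp only [hyx, F] at hF
  linarith

theorem apply_sub_pos_of_norm_sub_le (hK : Convex ℝ K)
    (hC : Bornology.IsBounded (K ∩ {x | g x < c})) (hx : x ∈ K ∩ {x | g x < c}) (hy : y ∈ K)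
    (hcy : c ≤ g y) {φ : StrongDual ℝ X}
    (hφ : ‖φ - g‖ ≤ (c - g x) / (4 * normSup (K ∩ {x | g x < c}))) :
    0 < φ (y - x) := by
  set S := normSup (K ∩ {x | g x < c})
  by_contra! hφyx
  have hslope : g y - g x ≤ (c - g x) / (4 * S) * ‖y - x‖ :=
    calc g y - g x ≤ (g - φ) (y - x) := by
          simp only [sub_apply, map_sub] at hφyx ⊢; linarith
      _ ≤ ‖g - φ‖ * ‖y - x‖ := (le_abs_self _).trans ((g - φ).le_opNorm (y - x))
      _ ≤ (c - g x) / (4 * S) * ‖y - x‖ := by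
          rw [norm_sub_rev]; gcongr
  have hS : 0 ≤ S := (norm_nonneg x).trans (norm_le_normSup hC hx)
  have hδ : 0 < c - g x := sub_pos.2 hx.2
  have hnear : 4 * S * (g y - g x) ≤ (c - g x) * ‖y - x‖ := by
    rcases hS.eq_or_lt with hS0 | hSpos
    · rw [← hS0]; simp only [mul_zero, zero_mul]; positivity
    · calc 4 * S * (g y - g x) ≤ 4 * S * ((c - g x) / (4 * S) * ‖y - x‖) := by gcongr
        _ = (c - g x) * ‖y - x‖ := by field_simp
  exact (mul_norm_sub_lt_of_convex hK hC hx hy hcy).not_ge hnear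

end SublevelPiece

end

theorem statement12_general {X : Type*} [NormedAddCommGroup X] [NormedSpace ℝ X]
    (f : StrongDual ℝ X)
    (ε : ℝ) (hε0 : 0 < ε) (p : ℤ) (η : ℝ)
    (μ : Ordinal) (fα : Ordinal → StrongDual ℝ X) (cα : Ordinal → ℝ)
    (Λp Λp1 : Set X)
    (hΛp : Λp = {x : X | f x ≥ ε * ‖x‖ + (p : ℝ)})
    (D : Ordinal → Set X)
    (hD : ∀ α, D α = Λp ∩ ⋂ γ ∈ Set.Iio α, {x : X | cα γ ≤ fα γ x})
    (C : Ordinal → Set X)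
    (hC : ∀ α, C α = D α ∩ {x : X | fα α x < cα α})
    (hCbdd : ∀ α < μ, Bornology.IsBounded (C α))
    (hCdiam : ∀ α < μ, Metric.diam (C α) < η)
    (hDμ : D μ = Λp1)
    (hcover : (⋃ α ∈ Set.Iio μ, C α) = Λp \ Λp1)
    (R : X → ℝ)
    (hR : ∀ α < μ, ∀ x ∈ C α, R x = (cα α - fα α x) / (4 * sSup ((fun u => ‖u‖) '' C α)))
    (t : X → StrongDual ℝ X)
    (ht : ∀ α < μ, ∀ x ∈ C α, ‖t x‖ = 1 ∧ ‖f - t x‖ < ε ∧ ‖t x - fα α‖ ≤ R x) :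
    (∀ x ∈ Λp \ Λp1, ∀ y : X, t x (y - x) ≤ 0 → y ∉ Λp1) ∧
    (∀ xs : ℕ → X, (∀ n, xs n ∈ Λp \ Λp1) →
      (∀ n : ℕ, t (xs n) (xs (n + 1) - xs n) ≤ 0) →
      ∃ n₀ : ℕ, ∀ n ≥ n₀, ∀ m ≥ n₀, ‖xs n - xs m‖ < η) := by
  have hDconvex : ∀ α, Convex ℝ (D α) := fun α => hD α ▸
    (hΛp ▸ convex_setOf_mul_norm_add_le f hε0.le p).inter
      (convex_iInter₂ fun γ _ => convex_halfSpace_ge (fα γ : X →ₗ[ℝ] ℝ).isLinear (cα γ))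
  have key : ∀ α < μ, ∀ β, α < β → ∀ x ∈ C α, ∀ y ∈ D β, 0 < t x (y - x) := by
    intro α hα β hαβ x hx y hy
    rw [hD] at hy
    obtain ⟨hyα, hcy⟩ := mem_inter_iInter_Iio_of_lt (g := fun γ => ⇑(fα γ)) hαβ hy
    rw [← hD] at hyα
    have hclose : ‖t x - fα α‖ ≤ (cα α - fα α x) / (4 * normSup (C α)) :=
      (ht α hα x hx).2.2.trans_eq (hR α hα x hx)
    have hbdd := hCbdd α hα
    rw [hC] at hx hbdd hclose
    exact apply_sub_pos_of_norm_sub_le (hDconvex α) hbdd hx hyα hcy hclose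
  have hpiece : ∀ x ∈ Λp \ Λp1, ∃ α < μ, x ∈ C α := by
    intro x hx
    rw [← hcover] at hx
    simpa only [mem_iUnion, mem_Iio, exists_prop] using hx
  refine ⟨fun x hx y hxy hy => ?_, fun xs hxs hdesc => ?_⟩
  · obtain ⟨α, hα, hxα⟩ := hpiece x hx
    exact (key α hα μ hα x hxα y (hDμ ▸ hy)).not_ge hxy
  · choose A hAμ hA using fun n => hpiece (xs n) (hxs n)
    have hAanti : Antitone A := antitone_nat_of_succ_le fun n => not_lt.1 fun hlt =>
      (key _ (hAμ n) _ hlt _ (hA n) _ (hC _ ▸ hA (n + 1)).1).not_ge (hdesc n)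
    obtain ⟨n₀, hconst⟩ := WellFoundedLT.antitone_chain_condition hAanti
    refine ⟨n₀, fun n hn m hm => ?_⟩
    rw [← dist_eq_norm]
    exact (Metric.dist_le_diam_of_mem (hCbdd _ (hAμ n₀)) (hconst n hn ▸ hA n)
      (hconst m hm ▸ hA m)).trans_lt (hCdiam _ (hAμ n₀))

theorem statement12 {X : Type*} [NormedAddCommGroup X] [NormedSpace ℝ X] [CompleteSpace X]
    (f : StrongDual ℝ X) (hf : ‖f‖ = 1)
    (ε : ℝ) (hε0 : 0 < ε) (hε1 : ε < 1) (p : ℤ) (η : ℝ) (hη : 0 < η)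
    (μ : Ordinal) (fα : Ordinal → StrongDual ℝ X) (cα : Ordinal → ℝ)
    (hfα : ∀ α < μ, ‖fα α - f‖ < ε)
    (Λp Λp1 : Set X)
    (hΛp : Λp = {x : X | f x ≥ ε * ‖x‖ + (p : ℝ)})
    (hΛp1 : Λp1 = {x : X | f x ≥ ε * ‖x‖ + ((p : ℝ) + 1)})
    (D : Ordinal → Set X)
    (hD : ∀ α, D α = Λp ∩ ⋂ γ ∈ Set.Iio α, {x : X | cα γ ≤ fα γ x})
    (C : Ordinal → Set X)
    (hC : ∀ α, C α = D α ∩ {x : X | fα α x < cα α})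
    (hCne : ∀ α < μ, (C α).Nonempty)
    (hCbdd : ∀ α < μ, Bornology.IsBounded (C α))
    (hCdiam : ∀ α < μ, Metric.diam (C α) < η)
    (hDμ : D μ = Λp1)
    (hdisj : ∀ α < μ, ∀ β < μ, α ≠ β → C α ∩ C β = ∅)
    (hcover : (⋃ α ∈ Set.Iio μ, C α) = Λp \ Λp1)
    (R : X → ℝ)
    (hR : ∀ α < μ, ∀ x ∈ C α, R x = (cα α - fα α x) / (4 * sSup ((fun u => ‖u‖) '' C α)))
    (t : X → StrongDual ℝ X)
    (ht : ∀ α < μ, ∀ x ∈ C α, ‖t x‖ = 1 ∧ ‖f - t x‖ < ε ∧ ‖t x - fα α‖ ≤ R x) :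
    (∀ x ∈ Λp \ Λp1, ∀ y : X, t x (y - x) ≤ 0 → y ∉ Λp1) ∧
    (∀ xs : ℕ → X, (∀ n, xs n ∈ Λp \ Λp1) →
      (∀ n : ℕ, t (xs n) (xs (n + 1) - xs n) ≤ 0) →
      ∃ n₀ : ℕ, ∀ n ≥ n₀, ∀ m ≥ n₀, ‖xs n - xs m‖ < η) :=
  statement12_general f ε hε0 p η μ fα cα Λp Λp1 hΛp D hD C hC hCbdd hCdiam hDμ hcover R hR t ht
end
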